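/- Let ξ ∈ D[√2]. Then there exists t ∈ D[ω] with t†t associate (over units of Z[√2]) to ξ if and only if there exists s ∈ D[ω] with s†s associate to √2·ξ. -/

import Mathlib

/-!
With `δ = 1 + ω` one has `δ†δ = 2 + √2 = λ√2`, `λ = 1 + √2` a unit of `ℤ[√2]`. Since `δ` and `δ/√2`
lie in `D[ω]`, replacing `t` by `δ t` multiplies `t†t` by `√2` up to the unit `λ`, and replacing `s`
by `(δ/√2) s` divides `s†s` by `√2` up to the same unit.
-/

noncomputable def ω : ℂ := (1 + Complex.I) / (Real.sqrt 2 : ℂ)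

noncomputable def zω (a b c d : ℤ) : ℂ := a * ω ^ 3 + b * ω ^ 2 + c * ω + d

/-- Membership in D[ω] = ℤ[1/√2, i]. -/
def inDω (t : ℂ) : Prop := ∃ k : ℕ, ∃ a b c d : ℤ, (Real.sqrt 2 : ℂ) ^ k * t = zω a b c d

/-- u is a unit of ℤ[√2] (viewed inside ℝ). -/
def unitZsqrt2 (u : ℝ) : Prop :=
  ∃ p q p' q' : ℤ, u = (p : ℝ) + q * Real.sqrt 2 ∧
    ((p : ℝ) + q * Real.sqrt 2) * ((p' : ℝ) + q' * Real.sqrt 2) = 1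

open ComplexConjugate

lemma ofReal_sqrt_two_sq : (Real.sqrt 2 : ℂ) ^ 2 = 2 := by
  rw [← Complex.ofReal_pow, Real.sq_sqrt zero_le_two]; norm_num

lemma ofReal_sqrt_two_ne_zero : (Real.sqrt 2 : ℂ) ≠ 0 := by
  simp

lemma ω_sq : ω ^ 2 = Complex.I := by
  rw [ω, div_pow, ofReal_sqrt_two_sq]
  linear_combination (1 / 2 : ℂ) * Complex.I_sq

lemma ω_pow_four : ω ^ 4 = -1 := by
  rw [show ω ^ 4 = (ω ^ 2) ^ 2 by ring, ω_sq, Complex.I_sq]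

lemma conj_ω : conj ω = (1 - Complex.I) / (Real.sqrt 2 : ℂ) := by
  rw [ω, map_div₀, map_add, map_one, Complex.conj_I, Complex.conj_ofReal, sub_eq_add_neg]

lemma conj_ω_mul_ω : conj ω * ω = 1 := by
  rw [conj_ω, ω, div_mul_div_comm, ← sq, ofReal_sqrt_two_sq]
  linear_combination (-1 / 2 : ℂ) * Complex.I_sq

lemma ω_add_conj_ω : ω + conj ω = (Real.sqrt 2 : ℂ) := by
  rw [conj_ω, ω, ← add_div, div_eq_iff ofReal_sqrt_two_ne_zero, ← sq, ofReal_sqrt_two_sq]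
  ring

lemma conj_one_add_ω_mul :
    conj (1 + ω) * (1 + ω) = (((1 + Real.sqrt 2) * Real.sqrt 2 : ℝ) : ℂ) := by
  rw [map_add, map_one]
  push_cast
  linear_combination conj_ω_mul_ω + ω_add_conj_ω - ofReal_sqrt_two_sq

lemma conj_one_add_ω_div_sqrt_two_mul :
    conj ((1 + ω) / (Real.sqrt 2 : ℂ)) * ((1 + ω) / (Real.sqrt 2 : ℂ)) =
      (((1 + Real.sqrt 2) * (Real.sqrt 2)⁻¹ : ℝ) : ℂ) := by
  rw [map_div₀, Complex.conj_ofReal, div_mul_div_comm, conj_one_add_ω_mul]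
  push_cast
  field_simp

lemma zω_mul_zω (a b c d a' b' c' d' : ℤ) :
    zω a b c d * zω a' b' c' d' =
      zω (d * a' + c * b' + b * c' + a * d') (d * b' + c * c' + b * d' - a * a')
        (d * c' + c * d' - b * a' - a * b') (d * d' - c * a' - b * b' - a * c') := by
  unfold zω
  push_cast
  linear_combination
    ((c * a' + b * b' + a * c' : ℂ) + (b * a' + a * b') * ω + a * a' * ω ^ 2) * ω_pow_four

namespace inDω

lemma mul {s t : ℂ} (hs : inDω s) (ht : inDω t) : inDω (s * t) := by
  obtain ⟨k, a, b, c, d, hk⟩ := hs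
  obtain ⟨m, a', b', c', d', hm⟩ := ht
  exact ⟨k + m, _, _, _, _, by rw [pow_add, mul_mul_mul_comm, hk, hm, zω_mul_zω]⟩

lemma one_add_ω : inDω (1 + ω) :=
  ⟨0, 0, 0, 1, 1, by simp [zω]; ring⟩

lemma one_add_ω_div_sqrt_two : inDω ((1 + ω) / (Real.sqrt 2 : ℂ)) :=
  ⟨1, 0, 0, 1, 1, by simp [zω, mul_div_cancel₀ _ ofReal_sqrt_two_ne_zero]; ring⟩

end inDω

lemma intCast_add_mul_sqrt_two_mul (p q r s : ℤ) :
    ((p : ℝ) + q * Real.sqrt 2) * ((r : ℝ) + s * Real.sqrt 2) =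
      ((p * r + 2 * q * s : ℤ) : ℝ) + ((p * s + q * r : ℤ) : ℝ) * Real.sqrt 2 := by
  push_cast
  linear_combination (q * s : ℝ) * Real.sq_sqrt (zero_le_two : (0 : ℝ) ≤ 2)

namespace unitZsqrt2

lemma mul {u v : ℝ} (hu : unitZsqrt2 u) (hv : unitZsqrt2 v) : unitZsqrt2 (u * v) := by
  obtain ⟨p, q, p', q', rfl, hpq⟩ := hu
  obtain ⟨r, s, r', s', rfl, hrs⟩ := hv
  refine ⟨_, _, p' * r' + 2 * q' * s', p' * s' + q' * r',
    intCast_add_mul_sqrt_two_mul p q r s, ?_⟩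
  rw [← intCast_add_mul_sqrt_two_mul, ← intCast_add_mul_sqrt_two_mul]
  linear_combination ((r : ℝ) + s * Real.sqrt 2) * ((r' : ℝ) + s' * Real.sqrt 2) * hpq + hrs

lemma one_add_sqrt_two : unitZsqrt2 (1 + Real.sqrt 2) :=
  ⟨1, 1, -1, 1, by push_cast; ring, by
    push_cast; linear_combination Real.sq_sqrt (zero_le_two : (0 : ℝ) ≤ 2)⟩

end unitZsqrt2

def IsDaggerDecomposable (ξ : ℝ) : Prop :=
  ∃ t : ℂ, inDω t ∧ ∃ u : ℝ, unitZsqrt2 u ∧ conj t * t = ((u * ξ : ℝ) : ℂ)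

lemma IsDaggerDecomposable.mul_of_conj_mul_self {c : ℂ} {v r ξ : ℝ} (hc : inDω c)
    (hv : unitZsqrt2 v) (hcc : conj c * c = ((v * r : ℝ) : ℂ)) (h : IsDaggerDecomposable ξ) :
    IsDaggerDecomposable (r * ξ) := by
  obtain ⟨t, ht, u, hu, htt⟩ := h
  refine ⟨c * t, hc.mul ht, v * u, hv.mul hu, ?_⟩
  rw [map_mul, mul_mul_mul_comm, hcc, htt]
  push_cast
  ring

theorem decomposable_iff_sqrt2_mul_general (ξ : ℝ) :
    (∃ t : ℂ, inDω t ∧ ∃ u : ℝ, unitZsqrt2 u ∧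
        (starRingEnd ℂ) t * t = ((u * ξ : ℝ) : ℂ)) ↔
    (∃ s : ℂ, inDω s ∧ ∃ u : ℝ, unitZsqrt2 u ∧
        (starRingEnd ℂ) s * s = ((u * (Real.sqrt 2 * ξ) : ℝ) : ℂ)) := by
  constructor
  · exact IsDaggerDecomposable.mul_of_conj_mul_self inDω.one_add_ω
      unitZsqrt2.one_add_sqrt_two conj_one_add_ω_mul
  · intro (h : IsDaggerDecomposable (Real.sqrt 2 * ξ))
    have h' : IsDaggerDecomposable ((Real.sqrt 2)⁻¹ * (Real.sqrt 2 * ξ)) :=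
      h.mul_of_conj_mul_self inDω.one_add_ω_div_sqrt_two
        unitZsqrt2.one_add_sqrt_two conj_one_add_ω_div_sqrt_two_mul
    rwa [inv_mul_cancel_left₀ (by positivity)] at h'

/-- ξ ∈ D[√2] is †-decomposable iff √2·ξ is †-decomposable. -/
theorem decomposable_iff_sqrt2_mul (ξ : ℝ)
    (hξ : ∃ a b : ℤ, ∃ k : ℕ, ξ = ((a : ℝ) + b * Real.sqrt 2) / 2 ^ k) :
    (∃ t : ℂ, inDω t ∧ ∃ u : ℝ, unitZsqrt2 u ∧
        (starRingEnd ℂ) t * t = ((u * ξ : ℝ) : ℂ)) ↔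
    (∃ s : ℂ, inDω s ∧ ∃ u : ℝ, unitZsqrt2 u ∧
        (starRingEnd ℂ) s * s = ((u * (Real.sqrt 2 * ξ) : ℝ) : ℂ)) :=
  decomposable_iff_sqrt2_mul_general ξ
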